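/- Let R = {r_1,…,r_t} ⊆ {1,…,L−1} and Γ = {K_{r_1},…,K_{r_t}}, and let G_λ(θ, R, Γ) be the composition of γ embeddings adding K_{r_i} neurons to layer r_i for i = 1,…,t, each with its own duplicated unit h_i and coefficients λ summing to one. Then for every parameter vector θ, the empirical risk of the network enlarged at all layers in R is preserved: R̂_emp(G_λ(θ, R, Γ)) = R_emp(θ). -/

import Mathlib

/-- Parameters of a fully connected feedforward network: `w ℓ j i` is the weight from
unit `i` of layer `ℓ-1` to unit `j` of layer `ℓ`, and `b ℓ j` is the bias of unit `j`
of layer `ℓ`.  Layers are numbered `1, …, L` (layer `0` is the input); units within a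
layer are numbered from `0`, so layer `ℓ` consists of the units `0, …, H ℓ - 1`. -/
structure NNParams where
  w : ℕ → ℕ → ℕ → ℝ
  b : ℕ → ℕ → ℝ

/-- `layerOut g H θ x ℓ i` : the output of unit `i` of layer `ℓ` on input `x`
(`layerOut g H θ x 0 = x`, and for `ℓ ≥ 1` it is `g` applied to the pre-activation). -/
noncomputable def layerOut (g : ℝ → ℝ) (H : ℕ → ℕ) (θ : NNParams) (x : ℕ → ℝ) :
    ℕ → ℕ → ℝ
  | 0, i => x i
  | ℓ + 1, i =>
      g (∑ j ∈ Finset.range (H ℓ), θ.w (ℓ + 1) i j * layerOut g H θ x ℓ j + θ.b (ℓ + 1) i)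

/-- Pre-activation `a_j^ℓ(x, θ)` of unit `j` of layer `ℓ ≥ 1`:
`a_j^ℓ = ∑_{i < H (ℓ-1)} w_{ji}^ℓ · (output of unit i of layer ℓ-1) + σ_j^ℓ`.
The outputs of the last layer `L` are `f_r(x,θ) = preact g H θ x L r` (linear output units). -/
noncomputable def preact (g : ℝ → ℝ) (H : ℕ → ℕ) (θ : NNParams) (x : ℕ → ℝ)
    (ℓ j : ℕ) : ℝ :=
  ∑ i ∈ Finset.range (H (ℓ - 1)), θ.w ℓ j i * layerOut g H θ x (ℓ - 1) i + θ.b ℓ j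

/-- Empirical risk `R_emp(θ) = (1/P) ∑_{p<P} ℒ(y^p, f(x^p, θ))`, where the network has
`L` layers with layer sizes given by `H`, the training inputs are `X p` and the labels
`Y p`, and `m` is the output dimension seen by the loss. -/
noncomputable def Remp (g : ℝ → ℝ) (H : ℕ → ℕ) (L P : ℕ) {m : ℕ}
    (X Y : ℕ → ℕ → ℝ) (loss : (ℕ → ℝ) → (Fin m → ℝ) → ℝ) (θ : NNParams) : ℝ :=
  (1 / (P : ℝ)) * ∑ p ∈ Finset.range P,
    loss (Y p) (fun r => preact g H θ (X p) L r)

/-- Layer sizes of the network enlarged by adding `K` new neurons to layer `l`. -/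
def enlargeH (H : ℕ → ℕ) (l K : ℕ) : ℕ → ℕ :=
  fun ℓ => if ℓ = l then H l + K else H ℓ

/-- The embedding `α_{ζv}` : copy all parameters, give the `k`-th new neuron of layer `l`
(`k = 0, …, K-1`, i.e. unit `H l + k`) the bias `ζ k` and incoming weights `v k`, and
set all weights from the new neurons to layer `l+1` to zero. -/
noncomputable def alphaEmb (H : ℕ → ℕ) (l K : ℕ) (ζ : ℕ → ℝ) (v : ℕ → ℕ → ℝ)
    (θ : NNParams) : NNParams where
  w := fun ℓ j i =>
    if ℓ = l ∧ H l ≤ j then v (j - H l) i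
    else if ℓ = l + 1 ∧ H l ≤ i then 0
    else θ.w ℓ j i
  b := fun ℓ j => if ℓ = l ∧ H l ≤ j then ζ (j - H l) else θ.b ℓ j

/-- The embedding `β_{ζs}` : copy all parameters except the biases of layer `l+1`, give
the `k`-th new neuron of layer `l` the bias `ζ k` and zero incoming weights, set the
outgoing weight from the `k`-th new neuron to unit `j` of layer `l+1` to `s j k`, and
replace the bias of unit `j` of layer `l+1` by `σ_j - ∑_{k<K} s j k · g (ζ k)`. -/
noncomputable def betaEmb (g : ℝ → ℝ) (H : ℕ → ℕ) (l K : ℕ) (ζ : ℕ → ℝ)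
    (s : ℕ → ℕ → ℝ) (θ : NNParams) : NNParams where
  w := fun ℓ j i =>
    if ℓ = l ∧ H l ≤ j then 0
    else if ℓ = l + 1 ∧ H l ≤ i then s j (i - H l)
    else θ.w ℓ j i
  b := fun ℓ j =>
    if ℓ = l ∧ H l ≤ j then ζ (j - H l)
    else if ℓ = l + 1 then θ.b (l + 1) j - ∑ k ∈ Finset.range K, s j k * g (ζ k)
    else θ.b ℓ j

/-- The embedding `γ_λ` : duplicate unit `h` of layer `l` into each of the `K` new
neurons (same bias and incoming weights as unit `h`), and split the outgoing weights:
unit `h` keeps `lam 0 · w_{jh}^{l+1}` and the `k`-th new neuron (`k = 0, …, K-1`,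
i.e. unit `H l + k`, corresponding to `λ_{k+1}` of the paper) gets
`lam (k+1) · w_{jh}^{l+1}`; all other parameters are copied. -/
noncomputable def gammaEmb (H : ℕ → ℕ) (l K : ℕ) (h : ℕ) (lam : ℕ → ℝ)
    (θ : NNParams) : NNParams where
  w := fun ℓ j i =>
    if ℓ = l ∧ H l ≤ j then θ.w l h i
    else if ℓ = l + 1 ∧ i = h then lam 0 * θ.w (l + 1) j h
    else if ℓ = l + 1 ∧ H l ≤ i then lam (i - H l + 1) * θ.w (l + 1) j h
    else θ.w ℓ j i
  b := fun ℓ j => if ℓ = l ∧ H l ≤ j then θ.b l h else θ.b ℓ j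

/-- `θ` with the single weight `w ℓ j i` replaced by `t`. -/
noncomputable def updW (θ : NNParams) (ℓ j i : ℕ) (t : ℝ) : NNParams :=
  ⟨fun ℓ' j' i' => if ℓ' = ℓ ∧ j' = j ∧ i' = i then t else θ.w ℓ' j' i', θ.b⟩

/-- `θ` with the single bias `b ℓ j` replaced by `t`. -/
noncomputable def updB (θ : NNParams) (ℓ j : ℕ) (t : ℝ) : NNParams :=
  ⟨θ.w, fun ℓ' j' => if ℓ' = ℓ ∧ j' = j then t else θ.b ℓ' j'⟩

/-- `∇ R_emp(θ) = 0` : every partial derivative of the empirical risk with respect to an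
actual network parameter (a weight `w ℓ j i` or a bias `b ℓ j`, `1 ≤ ℓ ≤ L`, `j < H ℓ`,
`i < H (ℓ-1)`) vanishes at `θ`. -/
def IsCritical (g : ℝ → ℝ) (H : ℕ → ℕ) (L P : ℕ) {m : ℕ}
    (X Y : ℕ → ℕ → ℝ) (loss : (ℕ → ℝ) → (Fin m → ℝ) → ℝ) (θ : NNParams) : Prop :=
  (∀ ℓ j i, 1 ≤ ℓ → ℓ ≤ L → j < H ℓ → i < H (ℓ - 1) →
      deriv (fun t => Remp g H L P X Y loss (updW θ ℓ j i t)) (θ.w ℓ j i) = 0) ∧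
  ∀ ℓ j, 1 ≤ ℓ → ℓ ≤ L → j < H ℓ →
      deriv (fun t => Remp g H L P X Y loss (updB θ ℓ j t)) (θ.b ℓ j) = 0

/-- Layer sizes after enlarging layer `p.1` by `p.2` neurons for each pair in the list. -/
def multiEnlargeH : (ℕ → ℕ) → List (ℕ × ℕ) → (ℕ → ℕ)
  | H, [] => H
  | H, (l, K) :: rest => multiEnlargeH (enlargeH H l K) rest

/-- Composition of `α` embeddings: for each `(l, K)` in the list (in order), add `K` new
neurons to layer `l` via `α` with biases `ζ l` and incoming weights `v l`. -/
noncomputable def multiAlpha (ζ : ℕ → ℕ → ℝ) (v : ℕ → ℕ → ℕ → ℝ) :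
    (ℕ → ℕ) → List (ℕ × ℕ) → NNParams → NNParams
  | _, [], θ => θ
  | H, (l, K) :: rest, θ =>
      multiAlpha ζ v (enlargeH H l K) rest (alphaEmb H l K (ζ l) (v l) θ)

noncomputable def multiBeta (g : ℝ → ℝ) (ζ : ℕ → ℕ → ℝ) (s : ℕ → ℕ → ℕ → ℝ) :
    (ℕ → ℕ) → List (ℕ × ℕ) → NNParams → NNParams
  | _, [], θ => θ
  | H, (l, K) :: rest, θ =>
      multiBeta g ζ s (enlargeH H l K) rest (betaEmb g H l K (ζ l) (s l) θ)

noncomputable def multiGamma (hsel : ℕ → ℕ) (lam : ℕ → ℕ → ℝ) :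
    (ℕ → ℕ) → List (ℕ × ℕ) → NNParams → NNParams
  | _, [], θ => θ
  | H, (l, K) :: rest, θ =>
      multiGamma hsel lam (enlargeH H l K) rest (gammaEmb H l K (hsel l) (lam l) θ)

/-- A single enlargement step: either a `β` embedding with zero outgoing weights, or a
`γ` embedding. -/
inductive EmbStep where
  | beta (l K : ℕ) (ζ : ℕ → ℝ)
  | gamma (l K : ℕ) (h : ℕ) (lam : ℕ → ℝ)

def EmbStep.layer : EmbStep → ℕ
  | .beta l _ _ => l
  | .gamma l _ _ _ => l

def EmbStep.count : EmbStep → ℕ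
  | .beta _ K _ => K
  | .gamma _ K _ _ => K

noncomputable def EmbStep.apply (g : ℝ → ℝ) (H : ℕ → ℕ) (θ : NNParams) : EmbStep → NNParams
  | .beta l K ζ => betaEmb g H l K ζ (fun _ _ => 0) θ
  | .gamma l K h lam => gammaEmb H l K h lam θ

def EmbStep.OK (H : ℕ → ℕ) (L : ℕ) : EmbStep → Prop
  | .beta l _ _ => 1 ≤ l ∧ l + 1 ≤ L
  | .gamma l K h lam => 1 ≤ l ∧ l + 1 ≤ L ∧ h < H l ∧ ∑ i ∈ Finset.range (K + 1), lam i = 1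

noncomputable def applySteps (g : ℝ → ℝ) : (ℕ → ℕ) → List EmbStep → NNParams → NNParams
  | _, [], θ => θ
  | H, st :: rest, θ =>
      applySteps g (enlargeH H st.layer st.count) rest (EmbStep.apply g H θ st)

def stepsH : (ℕ → ℕ) → List EmbStep → (ℕ → ℕ)
  | H, [] => H
  | H, st :: rest => stepsH (enlargeH H st.layer st.count) rest

/-!
Each new neuron of layer `l` has the incoming weights and bias of unit `h`, so on every input it
outputs exactly what `h` outputs. The outgoing weights of `h` are split among `h` and its copies
in proportions `λ_0, …, λ_K` summing to one, so every pre-activation of layer `l + 1` is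
unchanged, and with it everything above, in particular the network output. Enlarging a layer
only increases layer sizes, so the hypotheses of the later steps survive the earlier ones.
-/

open Finset

lemma enlargeH_self (H : ℕ → ℕ) (l K : ℕ) : enlargeH H l K l = H l + K := if_pos rfl

lemma enlargeH_of_ne (H : ℕ → ℕ) {l ℓ : ℕ} (K : ℕ) (hℓ : ℓ ≠ l) : enlargeH H l K ℓ = H ℓ :=
  if_neg hℓ

lemma le_enlargeH (H : ℕ → ℕ) (l K ℓ : ℕ) : H ℓ ≤ enlargeH H l K ℓ := by
  unfold enlargeH
  split_ifs with hℓ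
  · subst hℓ; exact Nat.le_add_right _ _
  · exact le_rfl

lemma layerOut_succ (g : ℝ → ℝ) (H : ℕ → ℕ) (θ : NNParams) (x : ℕ → ℝ) (n j : ℕ) :
    layerOut g H θ x (n + 1) j = g (preact g H θ x (n + 1) j) :=
  rfl

/-- The unit of the original network whose parameters unit `j` of layer `ℓ` carries after
`gammaEmb H l K h lam`. -/
def copiedUnit (H : ℕ → ℕ) (l h ℓ j : ℕ) : ℕ := if ℓ = l ∧ H l ≤ j then h else j

lemma copiedUnit_of_ne (H : ℕ → ℕ) {l ℓ : ℕ} (h j : ℕ) (hℓ : ℓ ≠ l) : copiedUnit H l h ℓ j = j :=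
  if_neg fun hc => hℓ hc.1

section GammaEmb

variable {g : ℝ → ℝ} {H : ℕ → ℕ} {l K h : ℕ} {lam : ℕ → ℝ} {θ : NNParams} {x : ℕ → ℝ}

lemma gammaEmb_b (ℓ j : ℕ) : (gammaEmb H l K h lam θ).b ℓ j = θ.b ℓ (copiedUnit H l h ℓ j) := by
  simp only [gammaEmb, copiedUnit]
  split_ifs with hc
  · rw [hc.1]
  · rfl

lemma gammaEmb_w_of_ne_succ {ℓ : ℕ} (j i : ℕ) (hℓ : ℓ ≠ l + 1) :
    (gammaEmb H l K h lam θ).w ℓ j i = θ.w ℓ (copiedUnit H l h ℓ j) i := by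
  simp only [gammaEmb, copiedUnit]
  split_ifs with hc <;> first | rw [hc.1] | rfl | omega

lemma sum_gammaEmb_w_mul (hh : h < H l) (hlam : ∑ i ∈ range (K + 1), lam i = 1)
    (j : ℕ) (u : ℕ → ℝ) :
    ∑ i ∈ range (H l + K), (gammaEmb H l K h lam θ).w (l + 1) j i * u (copiedUnit H l h l i)
      = ∑ i ∈ range (H l), θ.w (l + 1) j i * u i := by
  have hmem : h ∈ range (H l) := mem_range.2 hh
  have hold : ∀ i ∈ range (H l),
      (gammaEmb H l K h lam θ).w (l + 1) j i * u (copiedUnit H l h l i)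
        = (if i = h then lam 0 * θ.w (l + 1) j h else θ.w (l + 1) j i) * u i := by
    intro i hi
    have hi' : ¬ H l ≤ i := not_le.2 (mem_range.1 hi)
    simp [gammaEmb, copiedUnit, hi']
  have hnew : ∀ k ∈ range K,
      (gammaEmb H l K h lam θ).w (l + 1) j (H l + k) * u (copiedUnit H l h l (H l + k))
        = lam (k + 1) * (θ.w (l + 1) j h * u h) := by
    intro k _
    have hk : H l + k ≠ h := by omega
    simp [gammaEmb, copiedUnit, hk, mul_assoc]
  have htail : ∑ k ∈ range K, lam (k + 1) = 1 - lam 0 := by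
    rw [sum_range_succ'] at hlam
    linarith
  rw [sum_range_add, sum_congr rfl hold, sum_congr rfl hnew, ← sum_mul, htail,
    ← add_sum_erase _ _ hmem, ← add_sum_erase _ _ hmem, if_pos rfl,
    sum_congr rfl fun i hi => by rw [if_neg (ne_of_mem_erase hi)]]
  ring

lemma preact_gammaEmb_succ (hh : h < H l) (hlam : ∑ i ∈ range (K + 1), lam i = 1) (n j : ℕ)
    (hprev : ∀ i, layerOut g (enlargeH H l K) (gammaEmb H l K h lam θ) x n i
      = layerOut g H θ x n (copiedUnit H l h n i)) :
    preact g (enlargeH H l K) (gammaEmb H l K h lam θ) x (n + 1) j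
      = preact g H θ x (n + 1) (copiedUnit H l h (n + 1) j) := by
  simp only [preact, Nat.add_sub_cancel, hprev, gammaEmb_b]
  by_cases hn : n = l
  · subst hn
    rw [enlargeH_self, sum_gammaEmb_w_mul hh hlam, copiedUnit_of_ne H h j n.succ_ne_self]
  · rw [enlargeH_of_ne H K hn]
    refine congrArg (· + _) (sum_congr rfl fun i _ => ?_)
    rw [gammaEmb_w_of_ne_succ j i (by omega), copiedUnit_of_ne H h i hn]

lemma layerOut_gammaEmb (hl : 1 ≤ l) (hh : h < H l) (hlam : ∑ i ∈ range (K + 1), lam i = 1) :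
    ∀ ℓ j, layerOut g (enlargeH H l K) (gammaEmb H l K h lam θ) x ℓ j
      = layerOut g H θ x ℓ (copiedUnit H l h ℓ j)
  | 0, j => by rw [copiedUnit_of_ne H h j (by omega)]; rfl
  | n + 1, j => by
    rw [layerOut_succ, layerOut_succ,
      preact_gammaEmb_succ hh hlam n j (layerOut_gammaEmb hl hh hlam n)]

lemma preact_gammaEmb_of_lt (hl : 1 ≤ l) (hh : h < H l)
    (hlam : ∑ i ∈ range (K + 1), lam i = 1) {ℓ : ℕ} (hlℓ : l < ℓ) (j : ℕ) :
    preact g (enlargeH H l K) (gammaEmb H l K h lam θ) x ℓ j = preact g H θ x ℓ j := by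
  obtain ⟨n, rfl⟩ := Nat.exists_eq_add_of_lt hlℓ
  rw [preact_gammaEmb_succ hh hlam _ j (layerOut_gammaEmb hl hh hlam _),
    copiedUnit_of_ne H h j (by omega)]

end GammaEmb

lemma Remp_gammaEmb (g : ℝ → ℝ) (H : ℕ → ℕ) (L P : ℕ) {m : ℕ} (X Y : ℕ → ℕ → ℝ)
    (loss : (ℕ → ℝ) → (Fin m → ℝ) → ℝ) {l K h : ℕ} {lam : ℕ → ℝ} (θ : NNParams)
    (hl : 1 ≤ l) (hL : l + 1 ≤ L) (hh : h < H l) (hlam : ∑ i ∈ range (K + 1), lam i = 1) :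
    Remp g (enlargeH H l K) L P X Y loss (gammaEmb H l K h lam θ) = Remp g H L P X Y loss θ := by
  simp only [Remp, preact_gammaEmb_of_lt hl hh hlam hL]

lemma Remp_multiGamma (g : ℝ → ℝ) (L P : ℕ) {m : ℕ} (X Y : ℕ → ℕ → ℝ)
    (loss : (ℕ → ℝ) → (Fin m → ℝ) → ℝ) (hsel : ℕ → ℕ) (lam : ℕ → ℕ → ℝ) (RG : List (ℕ × ℕ)) :
    ∀ (H : ℕ → ℕ) (θ : NNParams), (∀ p ∈ RG, 1 ≤ p.1 ∧ p.1 + 1 ≤ L ∧ hsel p.1 < H p.1 ∧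
      ∑ i ∈ range (p.2 + 1), lam p.1 i = 1) →
    Remp g (multiEnlargeH H RG) L P X Y loss (multiGamma hsel lam H RG θ)
      = Remp g H L P X Y loss θ := by
  induction RG with
  | nil => intro _ _ _; rfl
  | cons p rest ih =>
    obtain ⟨l, K⟩ := p
    intro H θ hR
    obtain ⟨hl, hL, hh, hlam⟩ := hR (l, K) List.mem_cons_self
    have hR' : ∀ q ∈ rest, 1 ≤ q.1 ∧ q.1 + 1 ≤ L ∧ hsel q.1 < enlargeH H l K q.1 ∧
        ∑ i ∈ range (q.2 + 1), lam q.1 i = 1 := fun q hq => by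
      obtain ⟨h₁, h₂, h₃, h₄⟩ := hR q (List.mem_cons_of_mem _ hq)
      exact ⟨h₁, h₂, h₃.trans_le (le_enlargeH H l K q.1), h₄⟩
    exact (ih _ _ hR').trans (Remp_gammaEmb g H L P X Y loss θ hl hL hh hlam)

theorem multiGamma_preserves_Remp_general
    (g : ℝ → ℝ) (H : ℕ → ℕ) (L P : ℕ) (X Y : ℕ → ℕ → ℝ)
    (loss : (ℕ → ℝ) → (Fin (H L) → ℝ) → ℝ)
    (RG : List (ℕ × ℕ))
    (hsel : ℕ → ℕ) (lam : ℕ → ℕ → ℝ)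
    (hR : ∀ p ∈ RG, 1 ≤ p.1 ∧ p.1 + 1 ≤ L ∧ hsel p.1 < H p.1 ∧
      ∑ i ∈ Finset.range (p.2 + 1), lam p.1 i = 1)
    (θ : NNParams) :
    Remp g (multiEnlargeH H RG) L P X Y loss (multiGamma hsel lam H RG θ)
      = Remp g H L P X Y loss θ :=
  Remp_multiGamma g L P X Y loss hsel lam RG H θ hR

/-- Let `RG = [(r_1, K_{r_1}), …, (r_t, K_{r_t})]` describe adding
`K_{r_i}` neurons to the (pairwise distinct) hidden layers `r_i ∈ {1, …, L-1}`, each `γ`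
step duplicating its own unit `hsel r_i < H r_i` with coefficients `lam r_i` summing to
one.  Then for every parameter vector `θ`, the composition of `γ` embeddings preserves
the empirical risk: `R̂_emp(G_λ(θ, R, Γ)) = R_emp(θ)`. -/
theorem multiGamma_preserves_Remp
    (g : ℝ → ℝ) (H : ℕ → ℕ) (L P : ℕ) (X Y : ℕ → ℕ → ℝ)
    (loss : (ℕ → ℝ) → (Fin (H L) → ℝ) → ℝ)
    (RG : List (ℕ × ℕ)) (hnd : (RG.map Prod.fst).Nodup)
    (hsel : ℕ → ℕ) (lam : ℕ → ℕ → ℝ)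
    (hR : ∀ p ∈ RG, 1 ≤ p.1 ∧ p.1 + 1 ≤ L ∧ hsel p.1 < H p.1 ∧
      ∑ i ∈ Finset.range (p.2 + 1), lam p.1 i = 1)
    (θ : NNParams) :
    Remp g (multiEnlargeH H RG) L P X Y loss (multiGamma hsel lam H RG θ)
      = Remp g H L P X Y loss θ :=
  multiGamma_preserves_Remp_general g H L P X Y loss RG hsel lam hR θ
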